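/- arXiv:2510.24568 — 3 statements merged into one kernel-verified Lean document; each statement's English description precedes it below -/
import Mathlib

section
/- For any real numbers 0 < r < s and independent real-valued random variables A and B, the concentration function satisfies Q_r(A+B) ≤ P(|A| ≥ s) + 3·Q_r(A)·Q_s(B), where Q_r(X) = sup_{x ∈ ℝ} P(x < X ≤ x+r). -/
open MeasureTheory ProbabilityTheory Filter ENNReal

/-- The Lévy concentration function `Q_r(X) = sup_x P(x < X ≤ x + r)`. -/
noncomputable def Qc {Ω : Type*} [MeasurableSpace Ω] (μ : Measure Ω) (X : Ω → ℝ) (r : ℝ) : ℝ≥0∞ :=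
  ⨆ x : ℝ, μ {ω | x < X ω ∧ X ω ≤ x + r}

/-!
On the event `|A| < s`, if `A + B ∈ (x, x + r]` then `B` lies in `J = (x - s, x + r + s]`.
Conditioning on `B` (independence), `P(A + B ∈ (x, x + r], B ∈ J) ≤ Q_r(A) · P(B ∈ J)`,
and `J` has length `r + 2s ≤ 3s`, so it is covered by three intervals of length `s`.
-/

namespace Qc

variable {Ω : Type*} [MeasurableSpace Ω] {μ : Measure Ω}

lemma measure_preimage_Ioc_le (X : Ω → ℝ) (x r : ℝ) :
    μ (X ⁻¹' Set.Ioc x (x + r)) ≤ Qc μ X r :=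
  le_iSup_of_le x le_rfl

lemma map_Ioc_le {X : Ω → ℝ} (hX : Measurable X) (x r : ℝ) :
    μ.map X (Set.Ioc x (x + r)) ≤ Qc μ X r := by
  rw [Measure.map_apply hX measurableSet_Ioc]
  exact measure_preimage_Ioc_le X x r

lemma measure_preimage_Ioc_le_mul (X : Ω → ℝ) (s : ℝ) :
    ∀ (n : ℕ) (a b : ℝ), b - a ≤ n * s → μ (X ⁻¹' Set.Ioc a b) ≤ n * Qc μ X s
  | 0, a, b, h => by
    rw [Set.Ioc_eq_empty (by simpa using h)]
    simp
  | n + 1, a, b, h => by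
    have hsplit : Set.Ioc a b ⊆ Set.Ioc a (a + s) ∪ Set.Ioc (a + s) b := by
      intro y ⟨hay, hyb⟩
      rcases le_or_gt y (a + s) with hy | hy
      · exact Or.inl ⟨hay, hy⟩
      · exact Or.inr ⟨hy, hyb⟩
    have ih := measure_preimage_Ioc_le_mul X s n (a + s) b (by push_cast at h; linarith)
    calc μ (X ⁻¹' Set.Ioc a b)
        ≤ μ (X ⁻¹' Set.Ioc a (a + s)) + μ (X ⁻¹' Set.Ioc (a + s) b) :=
          (measure_mono (Set.preimage_mono hsplit)).trans (measure_union_le _ _)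
      _ ≤ Qc μ X s + n * Qc μ X s := add_le_add (measure_preimage_Ioc_le X a s) ih
      _ = (n + 1 : ℕ) * Qc μ X s := by push_cast; ring

lemma measure_add_mem_Ioc_and_mem_le [IsFiniteMeasure μ] {A B : Ω → ℝ}
    (hA : Measurable A) (hB : Measurable B) (hAB : IndepFun A B μ)
    (x r : ℝ) {J : Set ℝ} (hJ : MeasurableSet J) :
    μ {ω | A ω + B ω ∈ Set.Ioc x (x + r) ∧ B ω ∈ J} ≤ Qc μ A r * μ (B ⁻¹' J) := by
  set S : Set (ℝ × ℝ) := {p | p.1 + p.2 ∈ Set.Ioc x (x + r) ∧ p.2 ∈ J}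
  have hS : MeasurableSet S :=
    (measurableSet_Ioc.preimage (measurable_fst.add measurable_snd)).inter (measurable_snd hJ)
  have hslice : ∀ b, (μ.map A) ((fun a => (a, b)) ⁻¹' S) ≤ J.indicator (fun _ => Qc μ A r) b := by
    intro b
    by_cases hb : b ∈ J
    · rw [Set.indicator_of_mem hb]
      refine le_trans (measure_mono fun a ha => ?_) (map_Ioc_le hA (x - b) r)
      obtain ⟨⟨h₁, h₂⟩, -⟩ := ha
      constructor <;> simp only at h₁ h₂ <;> linarith
    · rw [Set.indicator_of_notMem hb]
      have hempty : (fun a => (a, b)) ⁻¹' S = ∅ :=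
        Set.eq_empty_of_forall_notMem fun _ ha => hb ha.2
      simp [hempty]
  have hmap : μ.map (fun ω => (A ω, B ω)) = (μ.map A).prod (μ.map B) :=
    (indepFun_iff_map_prod_eq_prod_map_map hA.aemeasurable hB.aemeasurable).mp hAB
  calc μ {ω | A ω + B ω ∈ Set.Ioc x (x + r) ∧ B ω ∈ J}
      = μ.map (fun ω => (A ω, B ω)) S := (Measure.map_apply (hA.prodMk hB) hS).symm
    _ = ∫⁻ b, (μ.map A) ((fun a => (a, b)) ⁻¹' S) ∂μ.map B := by
        rw [hmap, Measure.prod_apply_symm hS]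
    _ ≤ ∫⁻ b, J.indicator (fun _ => Qc μ A r) b ∂μ.map B := lintegral_mono hslice
    _ = Qc μ A r * μ (B ⁻¹' J) := by
        rw [lintegral_indicator_const hJ, Measure.map_apply hB hJ]

end Qc

theorem stmt0_general {Ω : Type*} [MeasurableSpace Ω] (μ : Measure Ω) [IsProbabilityMeasure μ]
    (A B : Ω → ℝ) (hA : Measurable A) (hB : Measurable B) (hAB : IndepFun A B μ)
    (r s : ℝ) (hrs : r < s) :
    Qc μ (fun ω => A ω + B ω) r ≤ μ {ω | s ≤ |A ω|} + 3 * Qc μ A r * Qc μ B s := by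
  refine iSup_le fun x => ?_
  set J := Set.Ioc (x - s) (x + r + s)
  have hcover : {ω | x < A ω + B ω ∧ A ω + B ω ≤ x + r} ⊆
      {ω | s ≤ |A ω|} ∪ {ω | A ω + B ω ∈ Set.Ioc x (x + r) ∧ B ω ∈ J} := by
    intro ω ⟨h₁, h₂⟩
    by_cases hA_large : s ≤ |A ω|
    · exact Or.inl hA_large
    · obtain ⟨h₃, h₄⟩ := abs_lt.mp (not_le.mp hA_large)
      exact Or.inr ⟨⟨h₁, h₂⟩, by linarith, by linarith⟩
  have hJ : μ (B ⁻¹' J) ≤ 3 * Qc μ B s := by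
    exact_mod_cast Qc.measure_preimage_Ioc_le_mul B s 3 _ _ (by push_cast; linarith)
  calc μ {ω | x < A ω + B ω ∧ A ω + B ω ≤ x + r}
      ≤ μ {ω | s ≤ |A ω|} + μ {ω | A ω + B ω ∈ Set.Ioc x (x + r) ∧ B ω ∈ J} :=
        (measure_mono hcover).trans (measure_union_le _ _)
    _ ≤ μ {ω | s ≤ |A ω|} + Qc μ A r * (3 * Qc μ B s) := by
        gcongr
        exact (Qc.measure_add_mem_Ioc_and_mem_le hA hB hAB x r measurableSet_Ioc).trans
          (by gcongr)
    _ = μ {ω | s ≤ |A ω|} + 3 * Qc μ A r * Qc μ B s := by ring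

theorem stmt0 {Ω : Type*} [MeasurableSpace Ω] (μ : Measure Ω) [IsProbabilityMeasure μ]
    (A B : Ω → ℝ) (hA : Measurable A) (hB : Measurable B) (hAB : IndepFun A B μ)
    (r s : ℝ) (hr : 0 < r) (hrs : r < s) :
    Qc μ (fun ω => A ω + B ω) r ≤ μ {ω | s ≤ |A ω|} + 3 * Qc μ A r * Qc μ B s :=
  stmt0_general μ A B hA hB hAB r s hrs
end

section
/- Let m be a positive integer and let b_1, ..., b_n be positive integers each coprime to m. Let ε_1, ..., ε_n be i.i.d. Rademacher random variables (taking values ±1 each with probability 1/2), and let X = Σ_{i=1}^n ε_i b_i. Then for every residue r modulo m, P(X ≡ r (mod m)) ≤ 1/m + √(2/(πn)) if m is odd, and P(X ≡ r (mod m)) ≤ 2/m + √(2/(πn)) if m is even. -/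
open MeasureTheory ProbabilityTheory Filter ENNReal

open Real in
-- Lemma B part 1: exp(-t) <= 1 - t + t^2/2 for t >= 0
lemma exp_neg_le_quad : ∀ t : ℝ, 0 ≤ t → Real.exp (-t) ≤ 1 - t + t^2/2 := by
  intro t ht
  have h : MonotoneOn (fun t : ℝ => 1 - t + t^2/2 - Real.exp (-t)) (Set.Ici 0) := by
    apply monotoneOn_of_deriv_nonneg (convex_Ici 0)
    · fun_prop
    · intro x hx
      apply DifferentiableAt.differentiableWithinAt
      fun_prop
    · intro x hx
      have hd : HasDerivAt (fun t : ℝ => 1 - t + t^2/2 - Real.exp (-t))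
          (-1 + x - (Real.exp (-x) * (-1))) x := by
        have h1 : HasDerivAt (fun t : ℝ => Real.exp (-t)) (Real.exp (-x) * (-1)) x :=
          ((hasDerivAt_id x).neg).exp
        have h2 : HasDerivAt (fun t : ℝ => 1 - t + t^2/2) (-1 + x) x := by
          have := ((hasDerivAt_pow 2 x).div_const 2)
          have h3 : HasDerivAt (fun t : ℝ => 1 - t) (-1) x := by
            simpa using (hasDerivAt_id x).const_sub 1
          refine (h3.add ((hasDerivAt_pow 2 x).div_const 2)).congr_deriv ?_
          norm_num
        exact h2.sub h1
      rw [hd.deriv]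
      have := Real.add_one_le_exp (-x)
      nlinarith [Real.exp_pos (-x)]
  have := h (Set.self_mem_Ici) (Set.mem_Ici.2 ht) ht
  simp at this
  linarith

open Real in
lemma exp_neg_ge_cubic : ∀ t : ℝ, 0 ≤ t → 1 - t + t^2/2 - t^3/6 ≤ Real.exp (-t) := by
  intro t ht
  have h : MonotoneOn (fun t : ℝ => Real.exp (-t) - (1 - t + t^2/2 - t^3/6)) (Set.Ici 0) := by
    apply monotoneOn_of_deriv_nonneg (convex_Ici 0)
    · fun_prop
    · intro x hx
      apply DifferentiableAt.differentiableWithinAt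
      fun_prop
    · intro x hx
      have h1 : HasDerivAt (fun t : ℝ => Real.exp (-t)) (Real.exp (-x) * (-1)) x :=
        ((hasDerivAt_id x).neg).exp
      have h2 : HasDerivAt (fun t : ℝ => 1 - t + t^2/2 - t^3/6)
          (-1 + (2:ℕ) * x ^ (2-1) / 2 - (3:ℕ) * x ^ (3-1) / 6) x := by
        have h3 : HasDerivAt (fun t : ℝ => 1 - t) (-1) x := by
          simpa using (hasDerivAt_id x).const_sub 1
        exact (h3.add ((hasDerivAt_pow 2 x).div_const 2)).sub ((hasDerivAt_pow 3 x).div_const 6)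
      have hd : HasDerivAt (fun t : ℝ => Real.exp (-t) - (1 - t + t^2/2 - t^3/6)) _ x := h1.sub h2
      rw [hd.deriv]
      have hx0 : (0:ℝ) ≤ x := le_of_lt (by simpa using hx)
      have := exp_neg_le_quad x hx0
      push_cast
      nlinarith
  have := h (Set.self_mem_Ici) (Set.mem_Ici.2 ht) ht
  simp at this
  linarith

-- cos x ≤ exp(-x^2/2) on [0, π/2]
open Real in
lemma cos_le_exp_neg_sq_half {x : ℝ} (h0 : 0 ≤ x) (h2 : x ≤ π/2) :
    Real.cos x ≤ Real.exp (-(x^2/2)) := by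
  rcases eq_or_lt_of_le h0 with rfl | hx
  · simp
  have hx1 : x/2 ≤ 1 := by
    have := Real.pi_lt_d2
    linarith
  have hs : x/2 - (x/2)^3/4 < Real.sin (x/2) := by
    have := Real.sin_gt_sub_cube (x := x/2) (by linarith)
    nlinarith [pow_pos (show (0:ℝ) < x/2 by linarith) 3]
  have hu2 : (x/2)^2 ≤ 1 := by nlinarith
  have hs0 : 0 < x/2 - (x/2)^3/4 := by nlinarith
  -- cos x = 1 - 2 sin(x/2)^2
  have hcos : Real.cos x = 1 - 2 * Real.sin (x/2) ^ 2 := by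
    have := Real.cos_two_mul (x/2)
    have hpyth := Real.sin_sq_add_cos_sq (x/2)
    have hxx : 2 * (x/2) = x := by ring
    rw [hxx] at this
    nlinarith
  have hsin_sq : (x/2 - (x/2)^3/4)^2 ≤ Real.sin (x/2) ^ 2 := by
    nlinarith
  have hcub := exp_neg_ge_cubic (x^2/2) (by positivity)
  have hpi : x^2 ≤ 2.49 := by
    have := Real.pi_lt_d2
    nlinarith
  nlinarith [hcos, hsin_sq, hcub]

open Real in
lemma gaussian_sum_le (c : ℝ) (hc : 0 < c) (K : ℕ) :
    ∑ d ∈ Finset.range K, Real.exp (-c * ((d:ℝ)+1)^2) ≤ Real.sqrt (π / c) / 2 := by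
  have hanti : AntitoneOn (fun t : ℝ => Real.exp (-c * t^2)) (Set.Icc 0 (0 + K)) := by
    intro x hx y hy hxy
    apply Real.exp_le_exp.2
    nlinarith [hx.1, hy.1, mul_le_mul_of_nonneg_left (mul_self_le_mul_self hx.1 hxy) hc.le, sq_nonneg x]
  have h1 := hanti.sum_le_integral
  simp only [zero_add] at h1
  have h2 : ∑ d ∈ Finset.range K, Real.exp (-c * ((d:ℝ)+1)^2)
      ≤ ∫ x in (0:ℝ)..(K:ℝ), Real.exp (-c * x^2) := by
    refine le_trans (le_of_eq ?_) h1
    apply Finset.sum_congr rfl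
    intro i _
    push_cast
    ring_nf
  have h3 : (∫ x in (0:ℝ)..(K:ℝ), Real.exp (-c * x^2))
      ≤ ∫ x in Set.Ioi (0:ℝ), Real.exp (-c * x^2) := by
    rw [intervalIntegral.integral_of_le (by positivity)]
    apply setIntegral_mono_set
    · exact (integrable_exp_neg_mul_sq hc).integrableOn
    · filter_upwards with x using le_of_lt (Real.exp_pos _)
    · apply Filter.Eventually.of_forall
      intro x hx
      exact hx.1
  have h4 := integral_gaussian_Ioi c
  calc ∑ d ∈ Finset.range K, Real.exp (-c * ((d:ℝ)+1)^2)
      ≤ ∫ x in (0:ℝ)..(K:ℝ), Real.exp (-c * x^2) := h2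
    _ ≤ ∫ x in Set.Ioi (0:ℝ), Real.exp (-c * x^2) := h3
    _ = Real.sqrt (π / c) / 2 := h4

lemma sum_comp_le {α : Type*} [DecidableEq α] (s : Finset α) (φ : α → ℕ) (F : ℕ → ℝ)
    (hF : ∀ d, 0 ≤ F d) (C : ℕ)
    (hfib : ∀ d, ((s.filter fun a => φ a = d).card ≤ C)) :
    ∑ a ∈ s, F (φ a) ≤ (C : ℝ) * ∑ d ∈ s.image φ, F d := by
  rw [Finset.sum_comp, Finset.mul_sum]
  apply Finset.sum_le_sum
  intro d _
  rw [nsmul_eq_mul]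
  exact mul_le_mul_of_nonneg_right (by exact_mod_cast hfib d) (hF d)

lemma sum_le_of_subset_image (T : Finset ℕ) (K : ℕ) (ι : ℕ → ℕ) (F : ℕ → ℝ)
    (hF : ∀ d, 0 ≤ F d) (hinj : Function.Injective ι)
    (hsub : T ⊆ (Finset.range K).image ι) :
    ∑ t ∈ T, F t ≤ ∑ d ∈ Finset.range K, F (ι d) := by
  calc ∑ t ∈ T, F t ≤ ∑ t ∈ (Finset.range K).image ι, F t :=
        Finset.sum_le_sum_of_subset_of_nonneg hsub (fun t _ _ => hF t)
    _ = ∑ d ∈ Finset.range K, F (ι d) :=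
        (Finset.sum_image (fun a _ b _ h => hinj h))

/-- distance of 2*min(v, m-v) to {0, m} -/
def gnat (m v : ℕ) : ℕ := min (2 * min v (m - v)) (m - 2 * min v (m - v))

lemma gnat_pos {m v : ℕ} (hv0 : 0 < v) (hvm : v < m) (h2v : 2*v ≠ m) :
    0 < gnat m v := by
  unfold gnat; omega

lemma gnat_le {m v : ℕ} : gnat m v ≤ m := by unfold gnat; omega

lemma two_gnat_le {m v : ℕ} (hv0 : 0 < v) (hvm : v < m) : 2 * gnat m v ≤ m := by
  unfold gnat; omega

open Real in
lemma cos_bound_nat (m v : ℕ) (hm : 0 < m) (hv0 : 0 < v) (hvm : v < m) (h2v : 2*v ≠ m) :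
    |Real.cos (2 * π * v / m)| ≤ Real.exp (-((π * gnat m v / m)^2 / 2)) := by
  have hmR : (0:ℝ) < m := by exact_mod_cast hm
  set w : ℕ := min v (m - v) with hw
  -- cos(2π v/m) = cos(2π w/m)
  have hcos_eq : Real.cos (2 * π * v / m) = Real.cos (2 * π * w / m) := by
    rcases min_cases v (m - v) with ⟨h1, _⟩ | ⟨h1, _⟩
    · rw [← hw] at h1; rw [h1]
    · rw [← hw] at h1; rw [h1]
      have hcast : ((m - v : ℕ) : ℝ) = (m : ℝ) - v := by
        have : v ≤ m := hvm.le
        push_cast [this]; ring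
      rw [hcast]
      have : 2 * π * ((m:ℝ) - v) / m = 2 * π - 2 * π * v / m := by
        field_simp
      rw [this, Real.cos_sub, Real.cos_two_pi, Real.sin_two_pi]
      ring
  have hw1 : 1 ≤ w := by omega
  have h2wm : 2 * w < m := by omega
  rcases le_or_gt (2 * w) (m - 2 * w) with hc | hc
  · -- g = 2w, x = 2πw/m ≤ π/2
    have hg : gnat m v = 2 * w := by unfold gnat; omega
    have h4w : 4 * w ≤ m := by omega
    have hx0 : (0:ℝ) ≤ 2 * π * w / m := by positivity
    have hx2 : 2 * π * w / m ≤ π / 2 := by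
      rw [div_le_div_iff₀ hmR (by norm_num)]
      have : (4:ℝ) * w ≤ m := by exact_mod_cast h4w
      nlinarith [Real.pi_pos]
    have hcnn : 0 ≤ Real.cos (2 * π * w / m) :=
      Real.cos_nonneg_of_mem_Icc ⟨by linarith [Real.pi_pos], hx2⟩
    rw [hcos_eq, abs_of_nonneg hcnn]
    have := cos_le_exp_neg_sq_half hx0 hx2
    convert this using 3
    rw [hg]; push_cast; ring
  · -- g = m - 2w, x = π - 2πw/m ≤ π/2
    have hg : gnat m v = m - 2 * w := by unfold gnat; omega
    have h4w : m ≤ 4 * w := by omega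
    have hgcast : ((m - 2*w : ℕ) : ℝ) = (m:ℝ) - 2*w := by push_cast [h2wm.le]; ring
    have hxval : π * ((gnat m v : ℕ) : ℝ) / m = π - 2 * π * w / m := by
      rw [hg, hgcast]; field_simp
    have hx0 : (0:ℝ) ≤ π - 2 * π * w / m := by
      have : 2 * π * w / m ≤ π := by
        rw [div_le_iff₀ hmR]
        have : (2:ℝ) * w ≤ m := by exact_mod_cast h2wm.le
        nlinarith [Real.pi_pos]
      linarith
    have hx2 : π - 2 * π * w / m ≤ π / 2 := by
      have h1 : π / 2 ≤ 2 * π * w / m := by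
        rw [le_div_iff₀ hmR]
        have : (m:ℝ) ≤ 4 * w := by exact_mod_cast h4w
        nlinarith [Real.pi_pos]
      linarith
    have hle : 2 * π * w / m ≤ π := by
      rw [div_le_iff₀ hmR]
      have : (2:ℝ) * w ≤ m := by exact_mod_cast h2wm.le
      nlinarith [Real.pi_pos]
    have hcnp : Real.cos (2 * π * w / m) ≤ 0 := by
      apply Real.cos_nonpos_of_pi_div_two_le_of_le (by linarith)
      linarith [Real.pi_pos]
    rw [hcos_eq, abs_of_nonpos hcnp]
    have hx2' := cos_le_exp_neg_sq_half hx0 hx2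
    rw [Real.cos_pi_sub] at hx2'
    calc -Real.cos (2 * π * ↑w / ↑m) ≤ Real.exp (-((π - 2 * π * ↑w / ↑m)^2/2)) := by
          exact hx2'
      _ = Real.exp (-((π * ↑(gnat m v) / ↑m)^2/2)) := by rw [hxval]

lemma gnat_fiber (m d : ℕ) : ∀ v, 0 < v → v < m → 2*v ≠ m → gnat m v = d →
    v = d/2 ∨ v = m - d/2 ∨ v = (m-d)/2 ∨ v = m - (m-d)/2 := by
  intro v h1 h2 h3 h4; unfold gnat at h4; omega

lemma gnat_fiber_odd (m d : ℕ) (hm : Odd m) : ∀ v, 0 < v → v < m → 2*v ≠ m → gnat m v = d →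
    (Even d → (v = d/2 ∨ v = m - d/2)) ∧ (¬ Even d → (v = (m-d)/2 ∨ v = m - (m-d)/2)) := by
  intro v h1 h2 h3 h4
  obtain ⟨t, ht⟩ := hm
  unfold gnat at h4
  constructor
  · rintro ⟨e, he⟩; omega
  · intro h
    rw [Nat.even_iff] at h
    omega

lemma gnat_even (m v : ℕ) (hm : Even m) (h2 : v < m) : Even (gnat m v) := by
  obtain ⟨t, ht⟩ := hm
  unfold gnat
  rw [Nat.even_iff]
  omega

noncomputable def Jset (m : ℕ) [NeZero m] : Finset (ZMod m) :=
  Finset.univ.filter (fun j : ZMod m => j ≠ 0 ∧ j + j ≠ 0)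

lemma val_facts {m : ℕ} [NeZero m] {k : ZMod m} (hk : k ∈ Jset m) :
    0 < k.val ∧ k.val < m ∧ 2 * k.val ≠ m := by
  rw [Jset, Finset.mem_filter] at hk
  obtain ⟨-, hk0, hkk⟩ := hk
  refine ⟨Nat.pos_of_ne_zero (fun h => hk0 ((ZMod.val_eq_zero k).1 h)), k.val_lt, ?_⟩
  intro h
  apply hkk
  have h1 : ((k.val + k.val : ℕ) : ZMod m) = k + k := by
    push_cast [ZMod.natCast_zmod_val]; ring
  rw [← h1, show k.val + k.val = m by omega, ZMod.natCast_self]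

open Real in
lemma sqrt_quarter {a : ℝ} (ha : 0 < a) : Real.sqrt (π / (4*a)) = Real.sqrt (π/a) / 2 := by
  rw [show π/(4*a) = (π/a) * (1/4) by ring, Real.sqrt_mul (by positivity),
    show Real.sqrt (1/4) = 1/2 by
      rw [show (1/4:ℝ) = (1/2)^2 by norm_num, Real.sqrt_sq (by norm_num)]]
  ring

open Real in
lemma sqrt_piC (m n : ℕ) (hm : (0:ℝ) < m) (hn : (0:ℝ) < n) :
    Real.sqrt (π / ((n:ℝ) * π^2 / (2 * (m:ℝ)^2))) = m * Real.sqrt (2 / (π * n)) := by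
  rw [show π / ((n:ℝ) * π^2 / (2 * (m:ℝ)^2)) = (m:ℝ)^2 * (2 / (π * n)) by
      field_simp [Real.pi_ne_zero],
    Real.sqrt_mul (by positivity), Real.sqrt_sq hm.le]

open Real in
lemma key_sum (m n : ℕ) [NeZero m] (hn : 0 < n) :
    ∑ k ∈ Jset m, |Real.cos (2 * π * k.val / m)| ^ n ≤ m * Real.sqrt (2 / (π * n)) := by
  have hm : 0 < m := Nat.pos_of_ne_zero (NeZero.ne m)
  have hmR : (0:ℝ) < m := by exact_mod_cast hm
  have hnR : (0:ℝ) < n := by exact_mod_cast hn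
  set C : ℝ := (n:ℝ) * π^2 / (2 * (m:ℝ)^2) with hCdef
  have hC : 0 < C := by positivity
  set F : ℕ → ℝ := fun d => Real.exp (-C * (d:ℝ)^2) with hFdef
  have hF : ∀ d, 0 ≤ F d := fun d => (Real.exp_pos _).le
  -- pointwise bound
  have step1 : ∑ k ∈ Jset m, |Real.cos (2 * π * k.val / m)| ^ n
      ≤ ∑ k ∈ Jset m, F (gnat m k.val) := by
    apply Finset.sum_le_sum
    intro k hk
    obtain ⟨h1, h2, h3⟩ := val_facts hk
    have hb := cos_bound_nat m k.val hm h1 h2 h3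
    calc |Real.cos (2 * π * k.val / m)| ^ n
        ≤ (Real.exp (-((π * gnat m k.val / m)^2 / 2))) ^ n :=
          pow_le_pow_left₀ (abs_nonneg _) hb n
      _ = F (gnat m k.val) := by
          rw [← Real.exp_nat_mul, hFdef]
          congr 1
          rw [hCdef]
          field_simp
  -- fiber bound
  have hfib4 : ∀ d, ((Jset m).filter (fun k => gnat m k.val = d)).card ≤ 4 := by
    intro d
    have hsub : ((Jset m).filter (fun k => gnat m k.val = d)) ⊆
        ({((d/2 : ℕ) : ZMod m), ((m - d/2 : ℕ) : ZMod m),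
          (((m-d)/2 : ℕ) : ZMod m), ((m - (m-d)/2 : ℕ) : ZMod m)} : Finset (ZMod m)) := by
      intro k hk
      rw [Finset.mem_filter] at hk
      obtain ⟨hkJ, hkd⟩ := hk
      obtain ⟨h1, h2, h3⟩ := val_facts hkJ
      have := gnat_fiber m d k.val h1 h2 h3 hkd
      simp only [Finset.mem_insert, Finset.mem_singleton]
      rcases this with h | h | h | h
      · left; rw [← h, ZMod.natCast_zmod_val]
      · right; left; rw [← h, ZMod.natCast_zmod_val]
      · right; right; left; rw [← h, ZMod.natCast_zmod_val]
      · right; right; right; rw [← h, ZMod.natCast_zmod_val]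
    calc ((Jset m).filter (fun k => gnat m k.val = d)).card
        ≤ _ := Finset.card_le_card hsub
      _ ≤ 4 := by
        apply le_trans (Finset.card_insert_le _ _)
        apply Nat.succ_le_succ
        apply le_trans (Finset.card_insert_le _ _)
        apply Nat.succ_le_succ
        apply le_trans (Finset.card_insert_le _ _)
        apply Nat.succ_le_succ
        simp
  have himage : ∀ k ∈ Jset m, 1 ≤ gnat m k.val ∧ gnat m k.val ≤ m := by
    intro k hk
    obtain ⟨h1, h2, h3⟩ := val_facts hk
    exact ⟨gnat_pos h1 h2 h3, gnat_le⟩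
  rcases Nat.even_or_odd m with hpar | hpar
  · -- even case
    have step2 := sum_comp_le (Jset m) (fun k => gnat m k.val) F hF 4 hfib4
    have step3 : ∑ d ∈ (Jset m).image (fun k => gnat m k.val), F d
        ≤ ∑ d ∈ Finset.range m, F (2*(d+1)) := by
      apply sum_le_of_subset_image _ m _ _ hF
      · intro a b h; simp only [] at h; omega
      · intro d hd
        rw [Finset.mem_image] at hd
        obtain ⟨k, hk, rfl⟩ := hd
        obtain ⟨hg1, hg2⟩ := himage k hk
        obtain ⟨u, hu⟩ := gnat_even m k.val hpar (val_facts hk).2.1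
        rw [Finset.mem_image]
        exact ⟨u - 1, Finset.mem_range.2 (by omega), by omega⟩
    have step4 : ∑ d ∈ Finset.range m, F (2*(d+1)) ≤ Real.sqrt (π / (4*C)) / 2 := by
      have := gaussian_sum_le (4*C) (by positivity) m
      refine le_trans (le_of_eq ?_) this
      apply Finset.sum_congr rfl
      intro d _
      simp only [hFdef, Real.exp_eq_exp]
      push_cast
      ring
    have hsqrt : Real.sqrt (π / (4*C)) = Real.sqrt (π / C) / 2 := sqrt_quarter hC
    have hfin : Real.sqrt (π / C) = m * Real.sqrt (2 / (π * n)) := by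
      rw [hCdef]; exact sqrt_piC m n hmR hnR
    calc ∑ k ∈ Jset m, |Real.cos (2 * π * k.val / m)| ^ n
        ≤ ∑ k ∈ Jset m, F (gnat m k.val) := step1
      _ ≤ 4 * ∑ d ∈ (Jset m).image (fun k => gnat m k.val), F d := by exact_mod_cast step2
      _ ≤ 4 * ∑ d ∈ Finset.range m, F (2*(d+1)) := by linarith [step3]
      _ ≤ 4 * (Real.sqrt (π / (4*C)) / 2) := by linarith [step4]
      _ = m * Real.sqrt (2 / (π * n)) := by rw [hsqrt, hfin]; ring
  · -- odd case
    have hfib2 : ∀ d, ((Jset m).filter (fun k => gnat m k.val = d)).card ≤ 2 := by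
      intro d
      rcases Nat.even_or_odd d with hd | hd
      · have hsub : ((Jset m).filter (fun k => gnat m k.val = d)) ⊆
            ({((d/2 : ℕ) : ZMod m), ((m - d/2 : ℕ) : ZMod m)} : Finset (ZMod m)) := by
          intro k hk
          rw [Finset.mem_filter] at hk
          obtain ⟨hkJ, hkd⟩ := hk
          obtain ⟨h1, h2, h3⟩ := val_facts hkJ
          have := ((gnat_fiber_odd m d hpar k.val h1 h2 h3 hkd).1 hd)
          simp only [Finset.mem_insert, Finset.mem_singleton]
          rcases this with h | h
          · left; rw [← h, ZMod.natCast_zmod_val]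
          · right; rw [← h, ZMod.natCast_zmod_val]
        calc _ ≤ _ := Finset.card_le_card hsub
          _ ≤ 2 := by
            apply le_trans (Finset.card_insert_le _ _)
            apply Nat.succ_le_succ; simp
      · have hsub : ((Jset m).filter (fun k => gnat m k.val = d)) ⊆
            ({(((m-d)/2 : ℕ) : ZMod m), ((m - (m-d)/2 : ℕ) : ZMod m)} : Finset (ZMod m)) := by
          intro k hk
          rw [Finset.mem_filter] at hk
          obtain ⟨hkJ, hkd⟩ := hk
          obtain ⟨h1, h2, h3⟩ := val_facts hkJ
          have := ((gnat_fiber_odd m d hpar k.val h1 h2 h3 hkd).2 (by simpa [Nat.even_iff, Nat.odd_iff] using hd))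
          simp only [Finset.mem_insert, Finset.mem_singleton]
          rcases this with h | h
          · left; rw [← h, ZMod.natCast_zmod_val]
          · right; rw [← h, ZMod.natCast_zmod_val]
        calc _ ≤ _ := Finset.card_le_card hsub
          _ ≤ 2 := by
            apply le_trans (Finset.card_insert_le _ _)
            apply Nat.succ_le_succ; simp
    have step2 := sum_comp_le (Jset m) (fun k => gnat m k.val) F hF 2 hfib2
    have step3 : ∑ d ∈ (Jset m).image (fun k => gnat m k.val), F d
        ≤ ∑ d ∈ Finset.range m, F (d+1) := by
      apply sum_le_of_subset_image _ m _ _ hF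
      · intro a b h; simp only [] at h; omega
      · intro d hd
        rw [Finset.mem_image] at hd
        obtain ⟨k, hk, rfl⟩ := hd
        obtain ⟨hg1, hg2⟩ := himage k hk
        rw [Finset.mem_image]
        exact ⟨gnat m k.val - 1, Finset.mem_range.2 (by omega), by omega⟩
    have step4 : ∑ d ∈ Finset.range m, F (d+1) ≤ Real.sqrt (π / C) / 2 := by
      have := gaussian_sum_le C hC m
      refine le_trans (le_of_eq ?_) this
      apply Finset.sum_congr rfl
      intro d _
      simp only [hFdef, Real.exp_eq_exp]
      push_cast
      ring
    have hfin : Real.sqrt (π / C) = m * Real.sqrt (2 / (π * n)) := by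
      rw [hCdef]; exact sqrt_piC m n hmR hnR
    calc ∑ k ∈ Jset m, |Real.cos (2 * π * k.val / m)| ^ n
        ≤ ∑ k ∈ Jset m, F (gnat m k.val) := step1
      _ ≤ 2 * ∑ d ∈ (Jset m).image (fun k => gnat m k.val), F d := by exact_mod_cast step2
      _ ≤ 2 * ∑ d ∈ Finset.range m, F (d+1) := by linarith [step3]
      _ ≤ 2 * (Real.sqrt (π / C) / 2) := by linarith [step4]
      _ = m * Real.sqrt (2 / (π * n)) := by rw [hfin]; ring

lemma psi_sum {m : ℕ} [NeZero m] {ι : Type*} (s : Finset ι) (f : ι → ZMod m) :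
    ZMod.stdAddChar (∑ i ∈ s, f i) = ∏ i ∈ s, ZMod.stdAddChar (f i) := by
  classical
  induction s using Finset.cons_induction with
  | empty => simp
  | cons a s ha ih => rw [Finset.sum_cons, Finset.prod_cons, AddChar.map_add_eq_mul, ih]

open Real in
lemma psi_plus_neg {m : ℕ} [NeZero m] (k : ZMod m) :
    ZMod.stdAddChar k + ZMod.stdAddChar (-k) =
      2 * ((Real.cos (2 * π * k.val / m) : ℝ) : ℂ) := by
  have h1 : ZMod.stdAddChar k = Complex.exp (((2 * π * k.val / m : ℝ) : ℂ) * Complex.I) := by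
    rw [ZMod.stdAddChar_apply, ZMod.toCircle_apply]
    push_cast
    ring_nf
  have h2 : ZMod.stdAddChar (-k) = Complex.exp (-(((2 * π * k.val / m : ℝ) : ℂ) * Complex.I)) := by
    rw [AddChar.map_neg_eq_inv, h1, ← Complex.exp_neg]
  rw [h1, h2, Complex.ofReal_cos, mul_comm]
  rw [Complex.cos]
  push_cast
  ring_nf

lemma orth {m : ℕ} [NeZero m] (y : ZMod m) :
    ∑ j : ZMod m, ZMod.stdAddChar (j * y) = if y = 0 then (m : ℂ) else 0 := by
  classical
  rw [AddChar.sum_mulShift y (ZMod.isPrimitive_stdAddChar m)]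
  split_ifs <;> simp [ZMod.card]

open Real in
lemma fourier_identity (m n : ℕ) [NeZero m] (b : ℕ → ℕ) (r : ZMod m) :
    (((Finset.filter (fun p => (((∑ i : Fin n, p i * (b i : ℤ) : ℤ)) : ZMod m) = r)
        (Fintype.piFinset (fun _ : Fin n => ({-1, 1} : Finset ℤ)))).card : ℂ)) * m =
    ∑ j : ZMod m, ZMod.stdAddChar (-(j * r)) *
      ∏ i : Fin n, (2 * ((Real.cos (2 * π * ((j * (b i : ZMod m)).val) / m) : ℝ) : ℂ)) := by
  classical
  set ψ := ZMod.stdAddChar (N := m) with hψ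
  set T := Fintype.piFinset (fun _ : Fin n => ({-1, 1} : Finset ℤ)) with hT
  set X : (Fin n → ℤ) → ZMod m := fun p => (((∑ i : Fin n, p i * (b i : ℤ) : ℤ)) : ZMod m) with hX
  have step1 : ∑ p ∈ T, (if X p = r then (m:ℂ) else 0) =
      ((Finset.filter (fun p => X p = r) T).card : ℂ) * m := by
    rw [Finset.sum_ite, Finset.sum_const, Finset.sum_const_zero, add_zero, nsmul_eq_mul]
  rw [← step1]
  have step2 : ∀ p, (if X p = r then (m:ℂ) else 0) = ∑ j : ZMod m, ψ (j * (X p - r)) := by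
    intro p
    rw [orth (X p - r)]
    congr 1
    simp [sub_eq_zero]
  simp_rw [step2]
  rw [Finset.sum_comm]
  apply Finset.sum_congr rfl
  intro j _
  have expand : ∀ p ∈ T, ψ (j * (X p - r)) =
      ψ (-(j * r)) * ∏ i : Fin n, ψ (j * ((p i : ZMod m) * (b i : ZMod m))) := by
    intro p hp
    have h1 : j * (X p - r) = (∑ i : Fin n, j * ((p i : ZMod m) * (b i : ZMod m))) + -(j * r) := by
      rw [hX]
      push_cast
      rw [mul_sub, Finset.mul_sum]
      ring
    rw [h1, AddChar.map_add_eq_mul, psi_sum, mul_comm]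
  rw [Finset.sum_congr rfl expand, ← Finset.mul_sum]
  congr 1
  have step3 : ∑ p ∈ T, ∏ i : Fin n, ψ (j * ((p i : ZMod m) * (b i : ZMod m))) =
      ∏ i : Fin n, ∑ t ∈ ({-1, 1} : Finset ℤ), ψ (j * ((t : ZMod m) * (b i : ZMod m))) := by
    rw [Finset.prod_univ_sum]
  rw [step3]
  apply Finset.prod_congr rfl
  intro i _
  rw [Finset.sum_pair (by norm_num : (-1 : ℤ) ≠ 1)]
  have e1 : j * (((-1 : ℤ) : ZMod m) * (b i : ZMod m)) = -(j * (b i : ZMod m)) := by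
    push_cast; ring
  have e2 : j * (((1 : ℤ) : ZMod m) * (b i : ZMod m)) = j * (b i : ZMod m) := by
    push_cast; ring
  rw [e1, e2, add_comm, psi_plus_neg]

lemma mem_Jset_mul {m : ℕ} [NeZero m] (u : (ZMod m)ˣ) {j : ZMod m} (hj : j ∈ Jset m) :
    j * ↑u ∈ Jset m := by
  simp only [Jset, Finset.mem_filter, Finset.mem_univ, true_and] at hj ⊢
  obtain ⟨h0, h2⟩ := hj
  constructor
  · intro h
    apply h0
    have : j * ↑u * ↑u⁻¹ = j := by rw [mul_assoc, Units.mul_inv, mul_one]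
    rw [← this, h, zero_mul]
  · intro h
    apply h2
    have h1 : (j + j) * ↑u = 0 := by rw [add_mul]; exact h
    have : (j + j) * ↑u * ↑u⁻¹ = j + j := by rw [mul_assoc, Units.mul_inv, mul_one]
    rw [← this, h1, zero_mul]

lemma reindexJ {m : ℕ} [NeZero m] (u : (ZMod m)ˣ) (f : ZMod m → ℝ) :
    ∑ j ∈ Jset m, f (j * ↑u) = ∑ k ∈ Jset m, f k := by
  apply Finset.sum_nbij' (i := fun j => j * (u : ZMod m)) (j := fun k => k * ((u⁻¹ : (ZMod m)ˣ) : ZMod m))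
  · intro a ha; exact mem_Jset_mul u ha
  · intro a ha; exact mem_Jset_mul u⁻¹ ha
  · intro a _; rw [mul_assoc, Units.mul_inv, mul_one]
  · intro a _; rw [mul_assoc, Units.inv_mul, mul_one]
  · intro a _; rfl

lemma S0_card {m : ℕ} [NeZero m] :
    ((Finset.univ.filter (fun j : ZMod m => j = 0 ∨ j + j = 0)).card : ℝ) ≤
      if Odd m then (1:ℝ) else 2 := by
  have hm : 0 < m := Nat.pos_of_ne_zero (NeZero.ne m)
  have hval : ∀ j : ZMod m, j ≠ 0 → j + j = 0 → 2 * j.val = m := by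
    intro j h0 h2
    have hv0 : j.val ≠ 0 := fun h => h0 ((ZMod.val_eq_zero j).1 h)
    have hvm : j.val < m := j.val_lt
    have hcast : ((2 * j.val : ℕ) : ZMod m) = 0 := by
      push_cast [ZMod.natCast_zmod_val]
      rw [two_mul]; exact h2
    rw [ZMod.natCast_eq_zero_iff] at hcast
    obtain ⟨c, hc⟩ := hcast
    have hcases : c = 0 ∨ c = 1 := by
      by_contra hcc
      push_neg at hcc
      have h2c : 2 ≤ c := by omega
      have : m * 2 ≤ m * c := Nat.mul_le_mul_left m h2c
      omega
    rcases hcases with rfl | rfl <;> omega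
  rcases Nat.even_or_odd m with hpar | hpar
  · have : (Finset.univ.filter (fun j : ZMod m => j = 0 ∨ j + j = 0)) ⊆
        {0, ((m/2 : ℕ) : ZMod m)} := by
      intro j hj
      rw [Finset.mem_filter] at hj
      simp only [Finset.mem_insert, Finset.mem_singleton]
      rcases hj.2 with h | h
      · left; exact h
      · by_cases h0 : j = 0
        · left; exact h0
        · right
          have hv := hval j h0 h
          rw [show m/2 = j.val by omega, ZMod.natCast_zmod_val]
    have h1 := Finset.card_le_card this
    have h2 := Finset.card_insert_le (0 : ZMod m) ({((m/2 : ℕ) : ZMod m)} : Finset (ZMod m))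
    simp only [Finset.card_singleton] at h2
    rw [if_neg (Nat.not_odd_iff_even.mpr hpar)]
    exact_mod_cast le_trans h1 h2
  · have : (Finset.univ.filter (fun j : ZMod m => j = 0 ∨ j + j = 0)) ⊆ {0} := by
      intro j hj
      rw [Finset.mem_filter] at hj
      simp only [Finset.mem_singleton]
      rcases hj.2 with h | h
      · exact h
      · by_cases h0 : j = 0
        · exact h0
        · exfalso
          have := hval j h0 h
          obtain ⟨t, ht⟩ := hpar
          omega
    have h1 := Finset.card_le_card this
    simp only [Finset.card_singleton] at h1
    rw [if_pos hpar]
    exact_mod_cast h1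

open Real in
lemma count_bound (m n : ℕ) [NeZero m] (hn : 0 < n) (b : ℕ → ℕ)
    (hb : ∀ i < n, Nat.Coprime (b i) m) (r : ZMod m) :
    ((Finset.filter (fun p => (((∑ i : Fin n, p i * (b i : ℤ) : ℤ)) : ZMod m) = r)
        (Fintype.piFinset (fun _ : Fin n => ({-1, 1} : Finset ℤ)))).card : ℝ) * m
      ≤ 2^n * ((if Odd m then (1:ℝ) else 2) + m * Real.sqrt (2 / (π * n))) := by
  classical
  have hnR : (0:ℝ) < n := by exact_mod_cast hn
  set c : ZMod m → ℝ := fun k => |Real.cos (2 * π * k.val / m)| with hc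
  set R : ZMod m → ℝ := fun j => ∏ i : Fin n, c (j * (b i : ZMod m)) with hR
  have hcnn : ∀ k, 0 ≤ c k := fun k => abs_nonneg _
  have hc1 : ∀ k, c k ≤ 1 := fun k => Real.abs_cos_le_one _
  -- step: abs of fourier identity
  have habs : ((Finset.filter (fun p => (((∑ i : Fin n, p i * (b i : ℤ) : ℤ)) : ZMod m) = r)
        (Fintype.piFinset (fun _ : Fin n => ({-1, 1} : Finset ℤ)))).card : ℝ) * m
      ≤ 2^n * ∑ j : ZMod m, R j := by
    have hid := fourier_identity m n b r
    have h1 := congrArg (‖·‖) hid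
    rw [norm_mul, Complex.norm_natCast, Complex.norm_natCast] at h1
    rw [h1]
    have h2 : ∀ j : ZMod m, ‖(ZMod.stdAddChar (-(j * r)) *
        ∏ i : Fin n, (2 * ((Real.cos (2 * π * ((j * (b i : ZMod m)).val) / m) : ℝ) : ℂ)))‖
        = 2^n * R j := by
      intro j
      rw [norm_mul, norm_prod]
      have habschar : ‖ZMod.stdAddChar (-(j * r))‖ = 1 := by
        rw [ZMod.stdAddChar_apply]
        exact Circle.norm_coe _
      rw [habschar, one_mul, hR]
      rw [show (2:ℝ)^n = ∏ _i : Fin n, (2:ℝ) by rw [Finset.prod_const, Finset.card_univ, Fintype.card_fin],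
        ← Finset.prod_mul_distrib]
      apply Finset.prod_congr rfl
      intro i _
      rw [norm_mul, Complex.norm_two, Complex.norm_real, Real.norm_eq_abs, hc]
    calc ‖(∑ j : ZMod m, ZMod.stdAddChar (-(j * r)) *
          ∏ i : Fin n, (2 * ((Real.cos (2 * π * ((j * (b i : ZMod m)).val) / m) : ℝ) : ℂ)))‖
        ≤ ∑ j : ZMod m, ‖(ZMod.stdAddChar (-(j * r)) *
          ∏ i : Fin n, (2 * ((Real.cos (2 * π * ((j * (b i : ZMod m)).val) / m) : ℝ) : ℂ)))‖ :=
          norm_sum_le _ _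
      _ = ∑ j : ZMod m, 2^n * R j := Finset.sum_congr rfl (fun j _ => h2 j)
      _ = 2^n * ∑ j : ZMod m, R j := by rw [Finset.mul_sum]
  refine le_trans habs ?_
  apply mul_le_mul_of_nonneg_left _ (by positivity)
  -- split the sum
  have hsplit : ∑ j : ZMod m, R j =
      (∑ j ∈ Finset.univ.filter (fun j : ZMod m => j = 0 ∨ j + j = 0), R j) +
      ∑ j ∈ Jset m, R j := by
    rw [← Finset.sum_filter_add_sum_filter_not Finset.univ (fun j : ZMod m => j = 0 ∨ j + j = 0)]
    congr 1
    apply Finset.sum_congr _ (fun _ _ => rfl)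
    rw [Jset]
    apply Finset.filter_congr
    intro j _
    push_neg
    tauto
  rw [hsplit]
  have hpart1 : ∑ j ∈ Finset.univ.filter (fun j : ZMod m => j = 0 ∨ j + j = 0), R j ≤
      if Odd m then (1:ℝ) else 2 := by
    refine le_trans ?_ S0_card
    calc ∑ j ∈ Finset.univ.filter (fun j : ZMod m => j = 0 ∨ j + j = 0), R j
        ≤ ∑ j ∈ Finset.univ.filter (fun j : ZMod m => j = 0 ∨ j + j = 0), 1 := by
          apply Finset.sum_le_sum
          intro j _
          rw [hR]
          exact Finset.prod_le_one (fun i _ => hcnn _) (fun i _ => hc1 _)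
      _ = _ := by rw [Finset.sum_const, nsmul_eq_mul, mul_one]
  have hpart2 : ∑ j ∈ Jset m, R j ≤ m * Real.sqrt (2 / (π * n)) := by
    have hamgm : ∀ j ∈ Jset m, R j ≤ ∑ i : Fin n, (1/(n:ℝ)) * c (j * (b i : ZMod m)) ^ n := by
      intro j _
      have := Real.geom_mean_le_arith_mean_weighted Finset.univ (fun _ : Fin n => 1/(n:ℝ))
        (fun i => c (j * (b i : ZMod m)) ^ n) (fun i _ => by positivity)
        (by rw [Finset.sum_const, Finset.card_univ, Fintype.card_fin, nsmul_eq_mul]; field_simp)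
        (fun i _ => by positivity)
      refine le_trans (le_of_eq ?_) this
      rw [hR]
      apply Finset.prod_congr rfl
      intro i _
      rw [← Real.rpow_natCast (c (j * (b i : ZMod m))) n, ← Real.rpow_mul (hcnn _),
        mul_one_div, div_self (by positivity : (n:ℝ) ≠ 0), Real.rpow_one]
    calc ∑ j ∈ Jset m, R j
        ≤ ∑ j ∈ Jset m, ∑ i : Fin n, (1/(n:ℝ)) * c (j * (b i : ZMod m)) ^ n :=
          Finset.sum_le_sum hamgm
      _ = ∑ i : Fin n, (1/(n:ℝ)) * ∑ j ∈ Jset m, c (j * (b i : ZMod m)) ^ n := by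
          rw [Finset.sum_comm]
          apply Finset.sum_congr rfl
          intro i _
          rw [Finset.mul_sum]
      _ = ∑ i : Fin n, (1/(n:ℝ)) * ∑ k ∈ Jset m, c k ^ n := by
          apply Finset.sum_congr rfl
          intro i _
          congr 1
          have hu := ZMod.unitOfCoprime (b i) (hb i i.isLt)
          have hcoe : ((ZMod.unitOfCoprime (b i) (hb i i.isLt) : (ZMod m)ˣ) : ZMod m)
              = (b i : ZMod m) := ZMod.coe_unitOfCoprime _ _
          rw [← hcoe]
          exact reindexJ (ZMod.unitOfCoprime (b i) (hb i i.isLt)) (fun k => c k ^ n)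
      _ = ∑ k ∈ Jset m, c k ^ n := by
          rw [Finset.sum_const, Finset.card_univ, Fintype.card_fin, nsmul_eq_mul]
          field_simp
      _ ≤ m * Real.sqrt (2 / (π * n)) := key_sum m n hn
  linarith

/-- The Rademacher distribution on ℤ: ±1 with probability 1/2 each. -/
noncomputable def radMeasureZ : Measure ℤ :=
  (1/2 : ℝ≥0∞) • Measure.dirac 1 + (1/2 : ℝ≥0∞) • Measure.dirac (-1)

lemma radMeasureZ_one : radMeasureZ {(1:ℤ)} = 1/2 := by
  simp [radMeasureZ, Measure.dirac_apply' _ (measurableSet_singleton _)]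

lemma radMeasureZ_neg_one : radMeasureZ {(-1:ℤ)} = 1/2 := by
  simp [radMeasureZ, Measure.dirac_apply' _ (measurableSet_singleton _)]

lemma radMeasureZ_bad : radMeasureZ ({-1, 1} : Set ℤ)ᶜ = 0 := by
  have hms : MeasurableSet (({-1, 1} : Set ℤ)ᶜ) := MeasurableSet.of_discrete
  simp only [radMeasureZ, Measure.add_apply, Measure.smul_apply, smul_eq_mul]
  rw [Measure.dirac_apply' _ hms, Measure.dirac_apply' _ hms]
  simp

open Real in
theorem stmt2 {Ω : Type*} [MeasurableSpace Ω] (μ : Measure Ω) [IsProbabilityMeasure μ]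
    (ε : ℕ → Ω → ℤ) (hmeas : ∀ i, Measurable (ε i))
    (hdist : ∀ i, Measure.map (ε i) μ = radMeasureZ)
    (hindep : iIndepFun ε μ)
    (m n : ℕ) (hm : 0 < m) (hn : 0 < n)
    (b : ℕ → ℕ) (hb : ∀ i < n, 0 < b i ∧ Nat.Coprime (b i) m)
    (r : ZMod m) :
    μ {ω | ((∑ i ∈ Finset.range n, ε i ω * (b i : ℤ) : ℤ) : ZMod m) = r} ≤
      ENNReal.ofReal ((if Odd m then (1 : ℝ) else 2) / m + Real.sqrt (2 / (Real.pi * n))) := by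
  classical
  haveI : NeZero m := ⟨hm.ne'⟩
  set T := Fintype.piFinset (fun _ : Fin n => ({-1, 1} : Finset ℤ)) with hT
  set E' := T.filter (fun p => (((∑ i : Fin n, p i * (b i : ℤ) : ℤ)) : ZMod m) = r) with hE'
  set ext : (Fin n → ℤ) → ℕ → ℤ := fun p i => if h : i < n then p ⟨i, h⟩ else 1 with hext
  set A : (Fin n → ℤ) → Set Ω := fun p => ⋂ i ∈ Finset.range n, (ε i) ⁻¹' {ext p i} with hA
  -- measure of each atom
  have hAmeas : ∀ p ∈ T, μ (A p) = (1/2 : ℝ≥0∞)^n := by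
    intro p hp
    have h1 : μ (A p) = ∏ i ∈ Finset.range n, μ ((ε i) ⁻¹' {ext p i}) := by
      apply hindep.meas_biInter
      intro i _
      exact ⟨{ext p i}, measurableSet_singleton _, rfl⟩
    rw [h1]
    have h2 : ∀ i ∈ Finset.range n, μ ((ε i) ⁻¹' {ext p i}) = 1/2 := by
      intro i hi
      rw [Finset.mem_range] at hi
      rw [← Measure.map_apply (hmeas i) (measurableSet_singleton _), hdist i]
      have hpi : p ⟨i, hi⟩ ∈ ({-1, 1} : Finset ℤ) := by
        rw [hT] at hp
        exact Fintype.mem_piFinset.1 hp _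
      rw [hext]
      simp only [hi, dif_pos]
      rcases Finset.mem_insert.1 hpi with h | h
      · rw [h]; exact radMeasureZ_neg_one
      · rw [Finset.mem_singleton.1 h]; exact radMeasureZ_one
    rw [Finset.prod_congr rfl h2, Finset.prod_const, Finset.card_range]
  -- the bad set
  set Gbad : Set Ω := ⋃ i ∈ Finset.range n, (ε i) ⁻¹' ({-1, 1} : Set ℤ)ᶜ with hG
  have hGbad : μ Gbad = 0 := by
    rw [hG]
    refine le_antisymm (le_trans (measure_biUnion_finset_le _ _) ?_) (by positivity)
    have : ∀ i ∈ Finset.range n, μ ((ε i) ⁻¹' ({-1, 1} : Set ℤ)ᶜ) = 0 := by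
      intro i _
      rw [← Measure.map_apply (hmeas i) MeasurableSet.of_discrete, hdist i]
      exact radMeasureZ_bad
    rw [Finset.sum_congr rfl this]
    simp
  -- inclusion
  have hsub : {ω | ((∑ i ∈ Finset.range n, ε i ω * (b i : ℤ) : ℤ) : ZMod m) = r} ⊆
      (⋃ p ∈ E', A p) ∪ Gbad := by
    intro ω hω
    by_cases hall : ∀ i, i < n → ε i ω = 1 ∨ ε i ω = -1
    · left
      set p : Fin n → ℤ := fun i => ε i ω with hp
      have hpT : p ∈ T := by
        rw [hT, Fintype.mem_piFinset]
        intro i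
        rcases hall i i.isLt with h | h <;> simp [hp, h]
      have hpP : (((∑ i : Fin n, p i * (b i : ℤ) : ℤ)) : ZMod m) = r := by
        have : (∑ i : Fin n, p i * (b i : ℤ)) = ∑ i ∈ Finset.range n, ε i ω * (b i : ℤ) :=
          Fin.sum_univ_eq_sum_range (fun i => ε i ω * (b i : ℤ)) n
        rw [this]
        exact hω
      refine Set.mem_biUnion (Finset.mem_filter.2 ⟨hpT, hpP⟩) ?_
      rw [hA]
      refine Set.mem_iInter₂.2 ?_
      intro i hi
      have hi' : i < n := Finset.mem_range.1 hi
      simp only [Set.mem_preimage, Set.mem_singleton_iff, hext, hi', dif_pos]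
      rfl
    · right
      push_neg at hall
      obtain ⟨i, hi, h1, h2⟩ := hall
      refine Set.mem_biUnion (Finset.mem_range.2 hi) ?_
      simp only [Set.mem_preimage, Set.mem_compl_iff, Set.mem_insert_iff, Set.mem_singleton_iff]
      tauto
  -- measure bound
  have hmeasb : μ {ω | ((∑ i ∈ Finset.range n, ε i ω * (b i : ℤ) : ℤ) : ZMod m) = r} ≤
      (E'.card : ℝ≥0∞) * (1/2 : ℝ≥0∞)^n := by
    calc μ {ω | ((∑ i ∈ Finset.range n, ε i ω * (b i : ℤ) : ℤ) : ZMod m) = r}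
        ≤ μ ((⋃ p ∈ E', A p) ∪ Gbad) := measure_mono hsub
      _ ≤ μ (⋃ p ∈ E', A p) + μ Gbad := measure_union_le _ _
      _ = μ (⋃ p ∈ E', A p) := by rw [hGbad, add_zero]
      _ ≤ ∑ p ∈ E', μ (A p) := measure_biUnion_finset_le _ _
      _ = ∑ p ∈ E', (1/2 : ℝ≥0∞)^n := by
          apply Finset.sum_congr rfl
          intro p hp
          exact hAmeas p (Finset.mem_filter.1 hp).1
      _ = (E'.card : ℝ≥0∞) * (1/2 : ℝ≥0∞)^n := by
          rw [Finset.sum_const, nsmul_eq_mul]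
  refine le_trans hmeasb ?_
  -- real arithmetic
  have hcb := count_bound m n hn b (fun i hi => (hb i hi).2) r
  rw [← hE'] at hcb
  have hmR : (0:ℝ) < m := by exact_mod_cast hm
  have hcard : (E'.card : ℝ) * (1/2)^n ≤
      (if Odd m then (1 : ℝ) else 2) / m + Real.sqrt (2 / (π * n)) := by
    have h2n : (0:ℝ) < 2^n := by positivity
    rw [div_add' _ _ _ hmR.ne'] at *
    rw [show ((1:ℝ)/2)^n = ((2:ℝ)^n)⁻¹ by rw [one_div, inv_pow]]
    rw [← le_div_iff₀ hmR] at hcb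
    calc (E'.card : ℝ) * ((2:ℝ)^n)⁻¹
        ≤ (2 ^ n * ((if Odd m then (1:ℝ) else 2) + ↑m * Real.sqrt (2 / (π * ↑n))) / ↑m) * ((2:ℝ)^n)⁻¹ := by
          apply mul_le_mul_of_nonneg_right hcb (by positivity)
      _ = ((if Odd m then (1:ℝ) else 2) + Real.sqrt (2 / (π * ↑n)) * ↑m) / ↑m := by
          field_simp
  have hENN : (E'.card : ℝ≥0∞) * (1/2 : ℝ≥0∞)^n = ENNReal.ofReal ((E'.card : ℝ) * (1/2)^n) := by
    rw [ENNReal.ofReal_mul (by positivity)]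
    congr 1
    · rw [ENNReal.ofReal_natCast]
    · rw [ENNReal.ofReal_pow (by norm_num : (0:ℝ) ≤ 1/2)]
      congr 1
      rw [ENNReal.ofReal_div_of_pos (by norm_num)]
      norm_num
  rw [hENN]
  exact ENNReal.ofReal_le_ofReal hcard
end

section
/- Let n, m ≥ 1 and let y_1, ..., y_m be positive real numbers. Over all n×m matrices A in which each row is a permutation of (y_1, ..., y_m), the maximum of Σ_{j=1}^m Π_{i=1}^n A_{ij} equals Σ_{j=1}^m y_j^n. -/
/-!
Each column product is bounded by AM-GM: `∏ᵢ aᵢ ≤ (∑ᵢ aᵢⁿ) / n`. Summing over the columns and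
exchanging the sums, every row contributes `∑ⱼ yⱼⁿ`, since it is a permutation of `y`; so the
total is at most `∑ⱼ yⱼⁿ`, which the matrix with all rows equal to `y` attains.
-/

open Finset

theorem Real.prod_le_sum_pow_card_div_card {ι : Type*} (s : Finset ι) (hs : s.Nonempty)
    (f : ι → ℝ) (hf : ∀ i ∈ s, 0 ≤ f i) :
    ∏ i ∈ s, f i ≤ (∑ i ∈ s, f i ^ #s) / #s := by
  have hcard : (0 : ℝ) < #s := by exact_mod_cast hs.card_pos
  have amgm := Real.geom_mean_le_arith_mean_weighted s (fun _ => (#s : ℝ)⁻¹)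
    (fun i => f i ^ #s) (fun _ _ => by positivity) (by simp [hcard.ne'])
    (fun i hi => pow_nonneg (hf i hi) _)
  calc ∏ i ∈ s, f i = ∏ i ∈ s, (f i ^ #s) ^ (#s : ℝ)⁻¹ :=
        prod_congr rfl fun i hi => (Real.pow_rpow_inv_natCast (hf i hi) hs.card_pos.ne').symm
    _ ≤ ∑ i ∈ s, (#s : ℝ)⁻¹ * f i ^ #s := amgm
    _ = (∑ i ∈ s, f i ^ #s) / #s := by rw [← mul_sum, inv_mul_eq_div]

theorem sum_prod_le_sum_sum_pow_div_card {ι κ : Type*} [Fintype ι] [Nonempty ι] [Fintype κ]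
    (A : ι → κ → ℝ) (hA : ∀ i j, 0 ≤ A i j) :
    ∑ j, ∏ i, A i j ≤ (∑ i, ∑ j, A i j ^ Fintype.card ι) / Fintype.card ι := by
  calc ∑ j, ∏ i, A i j ≤ ∑ j, (∑ i, A i j ^ Fintype.card ι) / Fintype.card ι :=
        sum_le_sum fun j _ =>
          Real.prod_le_sum_pow_card_div_card univ univ_nonempty _ fun i _ => hA i j
    _ = (∑ i, ∑ j, A i j ^ Fintype.card ι) / Fintype.card ι := by
        rw [← sum_div, sum_comm]

theorem stmt4_general (n m : ℕ) (hn : 1 ≤ n) (y : Fin m → ℝ) (hy : ∀ j, 0 < y j) :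
    IsGreatest
      {S : ℝ | ∃ A : Fin n → Fin m → ℝ,
        (∀ i, ∃ σ : Equiv.Perm (Fin m), ∀ j, A i j = y (σ j)) ∧
        S = ∑ j, ∏ i, A i j}
      (∑ j, (y j) ^ n) := by
  refine ⟨⟨fun _ j => y j, fun _ => ⟨Equiv.refl _, fun _ => rfl⟩, by simp⟩, ?_⟩
  rintro S ⟨A, hA, rfl⟩
  choose σ hσ using hA
  have : Nonempty (Fin n) := ⟨⟨0, hn⟩⟩
  have row_sum (i : Fin n) : ∑ j, A i j ^ n = ∑ j, y j ^ n := by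
    simp only [hσ]
    exact Equiv.sum_comp (σ i) (y · ^ n)
  have hn' : (n : ℝ) ≠ 0 := by positivity
  calc ∑ j, ∏ i, A i j ≤ (∑ i, ∑ j, A i j ^ n) / n := by
        simpa using sum_prod_le_sum_sum_pow_div_card A fun i j => by rw [hσ]; exact (hy _).le
    _ = ∑ j, y j ^ n := by simp [row_sum, hn']

theorem stmt4 (n m : ℕ) (hn : 1 ≤ n) (hm : 1 ≤ m) (y : Fin m → ℝ) (hy : ∀ j, 0 < y j) :
    IsGreatest
      {S : ℝ | ∃ A : Fin n → Fin m → ℝ,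
        (∀ i, ∃ σ : Equiv.Perm (Fin m), ∀ j, A i j = y (σ j)) ∧
        S = ∑ j, ∏ i, A i j}
      (∑ j, (y j) ^ n) :=
  stmt4_general n m hn y hy
end
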